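/- arXiv:1407.6701 — 3 statements merged into one kernel-verified Lean document; each statement's English description precedes it below -/
import Mathlib

section
/- Let Θ be a finite simple graph with vertex set V of cardinality n, and suppose that every vertex of the complementary graph Θ̄ has degree at most c₀ (i.e., every v ∈ V is non-adjacent in Θ to at most c₀ vertices w ≠ v). Then the growth rate of the right-angled Artin group A(Θ) relative to its standard generating set S = {s_v : v ∈ V} is at most log(2c₀ + 2) + 1; that is, limsup_{R→∞} (log #B_R(A(Θ), S))/R ≤ log(2c₀ + 2) + 1. -/
/-- The ball of radius `R` in a group `G` relative to a subset `S`: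
elements expressible as products of at most `R` elements of `S ∪ S⁻¹`. -/
def ball {G : Type*} [Group G] (S : Set G) (R : ℕ) : Set G :=
  {g | ∃ l : List G, l.length ≤ R ∧ (∀ t ∈ l, t ∈ S ∪ S⁻¹) ∧ l.prod = g}

/-- The commutator relators of the right-angled Artin group on a simple graph `Θ`. -/
def raagRels {V : Type*} (Θ : SimpleGraph V) : Set (FreeGroup V) :=
  {r | ∃ v w, Θ.Adj v w ∧
    r = FreeGroup.of v * FreeGroup.of w * (FreeGroup.of v)⁻¹ * (FreeGroup.of w)⁻¹}

/-- The right-angled Artin group `A(Θ)` associated to a simple graph `Θ`. -/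
abbrev RAAG {V : Type*} (Θ : SimpleGraph V) : Type _ := PresentedGroup (raagRels Θ)

/-- The standard generating set `S = {s_v : v ∈ V}` of `A(Θ)`. -/
def raagGens {V : Type*} (Θ : SimpleGraph V) : Set (RAAG Θ) :=
  Set.range (PresentedGroup.of (rels := raagRels Θ))

/-!
Every word in the standard generators can be rearranged, using only the commutation relations,
into a sequence of blocks of pairwise commuting letters in which every letter of a block fails to
commute with some letter of the next block (Cartier–Foata normal form). Read from the right, each
block is then a subset of the at most `d m` letters, `d = 2 c₀ + 2`, that fail to commute with the
`m` letters of the block before it. Weighting such a chain of total size `s` by `(d e)⁻ˢ`, the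
total weight of the chains starting inside a set `A` is at most `(1 + 1/d) ^ #A`, by induction on
the length and `(1 + 1/d) ^ d ≤ e`. Hence the ball of radius `R` has at most
`(d e) ^ R (1 + 1/d) ^ (2 #V)` elements.
-/

open Finset Filter

section BlockNormalForm

variable {α M : Type*} [Monoid M] (dep : α → α → Prop)

def IsBlock (C : List α) : Prop := C ≠ [] ∧ C.Pairwise fun u v => ¬dep u v

def DependsOnBlock (D D' : List α) : Prop := ∀ u ∈ D, ∃ v ∈ D', dep u v

variable {dep}

theorem IsBlock.cons {a : α} {C : List α} (hC : ∀ b ∈ C, ¬dep a b) (h : IsBlock dep C) :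
    IsBlock dep (a :: C) :=
  ⟨List.cons_ne_nil _ _, List.pairwise_cons.2 ⟨hC, h.2⟩⟩

variable (dep) [DecidableRel dep]

/-- Used when `a` commutes with the block `C`: `a` joins the last block, from `C` on, before the
first block containing a letter that depends on `a`. -/
def sinkInto (a : α) (C : List α) : List (List α) → List (List α)
  | [] => [a :: C]
  | C' :: B => if ∃ b ∈ C', dep a b then (a :: C) :: C' :: B else C :: sinkInto a C' B

def insertBlocks (a : α) : List (List α) → List (List α)
  | [] => [[a]]
  | C :: B => if ∃ b ∈ C, dep a b then [a] :: C :: B else sinkInto dep a C B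

variable {dep}

theorem length_flatten_sinkInto (a : α) (C : List α) (B : List (List α)) :
    (sinkInto dep a C B).flatten.length = (C :: B).flatten.length + 1 := by
  induction B generalizing C with
  | nil => simp [sinkInto]
  | cons C' B ih =>
    unfold sinkInto
    split_ifs <;> simp [ih]
    omega

theorem prod_flatten_sinkInto (f : α → M) (hcomm : ∀ a b, ¬dep a b → Commute (f a) (f b))
    {a : α} {C : List α} (hC : ∀ b ∈ C, ¬dep a b) (B : List (List α)) :
    ((sinkInto dep a C B).flatten.map f).prod = f a * ((C :: B).flatten.map f).prod := by
  induction B generalizing C with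
  | nil => simp [sinkInto]
  | cons C' B ih =>
    have hfC : Commute (f a) (C.map f).prod :=
      Commute.list_prod_right _ _ (by simpa using fun b hb => hcomm a b (hC b hb))
    unfold sinkInto
    split_ifs with h
    · simp
    · push Not at h
      simp only [List.flatten_cons, List.map_append, List.prod_append, ih h]
      exact (hfC.left_comm _).symm

theorem isBlock_sinkInto {a : α} {C : List α} (hC : ∀ b ∈ C, ¬dep a b) {B : List (List α)}
    (hB : ∀ D ∈ C :: B, IsBlock dep D) : ∀ D ∈ sinkInto dep a C B, IsBlock dep D := by
  induction B generalizing C with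
  | nil => simpa [sinkInto] using (hB C (by simp)).cons hC
  | cons C' B ih =>
    rw [List.forall_mem_cons] at hB
    unfold sinkInto
    split_ifs with h
    · exact List.forall_mem_cons.2 ⟨hB.1.cons hC, hB.2⟩
    · push Not at h
      exact List.forall_mem_cons.2 ⟨hB.1, ih h hB.2⟩

theorem head_sinkInto (a : α) (C : List α) (B : List (List α)) :
    ∃ D B', sinkInto dep a C B = D :: B' ∧ C ⊆ D := by
  cases B with
  | nil => exact ⟨_, _, rfl, List.subset_cons_self a C⟩
  | cons C' B =>
    unfold sinkInto
    split_ifs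
    · exact ⟨_, _, rfl, List.subset_cons_self a C⟩
    · exact ⟨_, _, rfl, List.Subset.refl C⟩

theorem isChain_sinkInto (a : α) {C : List α} {B : List (List α)}
    (hB : (C :: B).IsChain (DependsOnBlock dep)) :
    (sinkInto dep a C B).IsChain (DependsOnBlock dep) := by
  induction B generalizing C with
  | nil => simp [sinkInto]
  | cons C' B ih =>
    rw [List.isChain_cons_cons] at hB
    unfold sinkInto
    split_ifs with h
    · refine List.isChain_cons_cons.2 ⟨?_, hB.2⟩
      simpa [DependsOnBlock, h] using hB.1
    · obtain ⟨D, B', hD, hC'D⟩ := head_sinkInto (dep := dep) a C' B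
      have hrest := ih hB.2
      rw [hD] at hrest ⊢
      refine List.isChain_cons_cons.2 ⟨fun u hu => ?_, hrest⟩
      obtain ⟨v, hv, huv⟩ := hB.1 u hu
      exact ⟨v, hC'D hv, huv⟩

theorem length_flatten_insertBlocks (a : α) (B : List (List α)) :
    (insertBlocks dep a B).flatten.length = B.flatten.length + 1 := by
  cases B with
  | nil => simp [insertBlocks]
  | cons C B =>
    rw [insertBlocks]
    split_ifs
    · simp
    · exact length_flatten_sinkInto a C B

theorem prod_flatten_insertBlocks (f : α → M) (hcomm : ∀ a b, ¬dep a b → Commute (f a) (f b))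
    (a : α) (B : List (List α)) :
    ((insertBlocks dep a B).flatten.map f).prod = f a * (B.flatten.map f).prod := by
  cases B with
  | nil => simp [insertBlocks]
  | cons C B =>
    rw [insertBlocks]
    split_ifs with h
    · simp
    · push Not at h
      exact prod_flatten_sinkInto f hcomm h B

theorem isBlock_insertBlocks (a : α) {B : List (List α)} (hB : ∀ C ∈ B, IsBlock dep C) :
    ∀ C ∈ insertBlocks dep a B, IsBlock dep C := by
  have ha : IsBlock dep [a] := ⟨List.cons_ne_nil _ _, List.pairwise_singleton _ _⟩
  cases B with
  | nil => simpa [insertBlocks] using ha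
  | cons C B =>
    rw [insertBlocks]
    split_ifs with h
    · exact List.forall_mem_cons.2 ⟨ha, hB⟩
    · push Not at h
      exact isBlock_sinkInto h hB

theorem isChain_insertBlocks (a : α) {B : List (List α)}
    (hB : B.IsChain (DependsOnBlock dep)) :
    (insertBlocks dep a B).IsChain (DependsOnBlock dep) := by
  cases B with
  | nil => simp [insertBlocks]
  | cons C B =>
    rw [insertBlocks]
    split_ifs with h
    · exact List.isChain_cons_cons.2 ⟨by simpa [DependsOnBlock] using h, hB⟩
    · exact isChain_sinkInto a hB

theorem exists_blocks (f : α → M) (hcomm : ∀ a b, ¬dep a b → Commute (f a) (f b)) (w : List α) :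
    ∃ B : List (List α), (∀ C ∈ B, IsBlock dep C) ∧
      B.IsChain (DependsOnBlock dep) ∧
      B.flatten.length = w.length ∧ (B.flatten.map f).prod = (w.map f).prod := by
  induction w with
  | nil => exact ⟨[], by simp, by simp, by simp, by simp⟩
  | cons a w ih =>
    obtain ⟨B, hblock, hchain, hlen, hprod⟩ := ih
    refine ⟨insertBlocks dep a B, isBlock_insertBlocks a hblock, isChain_insertBlocks a hchain,
      ?_, ?_⟩
    · rw [length_flatten_insertBlocks, hlen, List.length_cons]
    · rw [prod_flatten_insertBlocks f hcomm, hprod, List.map_cons, List.prod_cons]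

end BlockNormalForm

section FinsetBlocks

variable {α M : Type*} [Monoid M]

noncomputable def blocksProd (f : α → M) (l : List (Finset α)) : M :=
  (l.reverse.map fun E => (E.toList.map f).prod).prod

variable [DecidableEq α] {dep : α → α → Prop}

theorem exists_finset_blocks (hrefl : ∀ a, dep a a) (f : α → M)
    (hcomm : ∀ a b, ¬dep a b → Commute (f a) (f b)) (w : List α) :
    ∃ l : List (Finset α), (∀ E ∈ l, E.Nonempty) ∧
      (l.IsChain fun E E' => ∀ u ∈ E', ∃ v ∈ E, dep u v) ∧ (l.map card).sum = w.length ∧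
      blocksProd f l = (w.map f).prod := by
  classical
  obtain ⟨B, hblock, hchain, hlen, hprod⟩ := exists_blocks f hcomm w
  have hnodup : ∀ C ∈ B, C.Nodup := fun C hC =>
    (hblock C hC).2.imp fun {a b} h (e : a = b) => h (e ▸ hrefl a)
  refine ⟨(B.map List.toFinset).reverse, ?_, ?_, ?_, ?_⟩
  · simpa using fun C hC => (hblock C hC).1
  · rw [List.isChain_reverse, List.isChain_map]
    exact hchain.imp fun C C' h u hu => by simpa using h u (by simpa using hu)
  · rw [List.map_reverse, List.sum_reverse, List.map_map, ← hlen, List.length_flatten]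
    exact congrArg List.sum (List.map_congr_left fun C hC =>
      List.toFinset_card_of_nodup (hnodup C hC))
  · rw [blocksProd, List.reverse_reverse, List.map_map, ← hprod, List.map_flatten,
      List.prod_flatten, List.map_map]
    refine congrArg List.prod (List.map_congr_left fun C hC => ?_)
    exact (((List.toFinset_toList (hnodup C hC)).symm.map f).prod_eq'
      ((hblock C hC).2.map f hcomm)).symm

end FinsetBlocks

section ChainCount

variable {α : Type*} [DecidableEq α] (N : Finset α → Finset α)

def chainsFrom : ℕ → Finset α → Finset (List (Finset α))
  | 0, _ => {[]}
  | k + 1, A =>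
    insert [] ((A.powerset.erase ∅).biUnion fun E => (chainsFrom k (N E)).image (E :: ·))

variable {N}

theorem mem_chainsFrom {k : ℕ} {A : Finset α} {l : List (Finset α)} (hk : l.length ≤ k)
    (hne : ∀ E ∈ l, E.Nonempty) (hA : ∀ E ∈ l.head?, E ⊆ A) (hl : l.IsChain fun E E' => E' ⊆ N E) :
    l ∈ chainsFrom N k A := by
  induction l generalizing k A with
  | nil => cases k <;> simp [chainsFrom]
  | cons E l ih =>
    cases k with
    | zero => simp at hk
    | succ k =>
      rw [List.isChain_cons] at hl
      refine mem_insert_of_mem (mem_biUnion.2 ⟨E, ?_, mem_image_of_mem _ ?_⟩)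
      · exact mem_erase.2 ⟨(hne E (by simp)).ne_empty, mem_powerset.2 (hA E rfl)⟩
      · exact ih (by simpa using hk) (fun F hF => hne F (by simp [hF])) hl.1 hl.2

theorem sum_inv_pow_chainsFrom_le {d : ℕ} (hN : ∀ E, #(N E) ≤ d * #E) {x q : ℝ} (hx : 0 < x)
    (hq : 1 ≤ q) (hqx : q ^ d ≤ x * (q - 1)) (k : ℕ) (A : Finset α) :
    ∑ l ∈ chainsFrom N k A, x⁻¹ ^ (l.map card).sum ≤ q ^ #A := by
  induction k generalizing A with
  | zero => simp [chainsFrom, one_le_pow₀ hq]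
  | succ k ih =>
    have hstep : ∀ E : Finset α, x⁻¹ ^ #E * q ^ #(N E) ≤ (q - 1) ^ #E := fun E =>
      calc x⁻¹ ^ #E * q ^ #(N E) ≤ x⁻¹ ^ #E * (q ^ d) ^ #E := by
            rw [← pow_mul]
            exact mul_le_mul_of_nonneg_left (pow_le_pow_right₀ hq (hN E)) (by positivity)
        _ = (x⁻¹ * q ^ d) ^ #E := (mul_pow _ _ _).symm
        _ ≤ (q - 1) ^ #E := by
            gcongr
            rwa [inv_mul_le_iff₀ hx]
    have hnil : ([] : List (Finset α)) ∉
        (A.powerset.erase ∅).biUnion fun E => (chainsFrom N k (N E)).image (E :: ·) := by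
      simp
    have hdisj : (A.powerset.erase ∅ : Set (Finset α)).PairwiseDisjoint
        fun E => (chainsFrom N k (N E)).image (E :: ·) := by
      intro E _ F _ hEF
      simp only [Function.onFun, disjoint_left, mem_image]
      rintro _ ⟨l, -, rfl⟩ ⟨m, -, h⟩
      exact hEF (List.cons.inj h).1.symm
    calc ∑ l ∈ chainsFrom N (k + 1) A, x⁻¹ ^ (l.map card).sum
        = 1 + ∑ E ∈ A.powerset.erase ∅, x⁻¹ ^ #E *
            ∑ l ∈ chainsFrom N k (N E), x⁻¹ ^ (l.map card).sum := by
          rw [chainsFrom, sum_insert hnil, sum_biUnion hdisj]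
          simp [sum_image, pow_add, mul_sum, mul_comm]
      _ ≤ 1 + ∑ E ∈ A.powerset.erase ∅, (q - 1) ^ #E := by
          gcongr with E
          exact (mul_le_mul_of_nonneg_left (ih _) (by positivity)).trans (hstep E)
      _ = ∑ E ∈ A.powerset, (q - 1) ^ #E * 1 ^ (#A - #E) := by
          rw [← add_sum_erase _ _ (empty_mem_powerset A)]
          simp
      _ = q ^ #A := by rw [sum_pow_mul_eq_add_pow, sub_add_cancel]

theorem card_filter_chainsFrom_le {d : ℕ} (hN : ∀ E, #(N E) ≤ d * #E) {x q : ℝ} (hx : 1 ≤ x)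
    (hq : 1 ≤ q) (hqx : q ^ d ≤ x * (q - 1)) (R k : ℕ) (A : Finset α) :
    (#{l ∈ chainsFrom N k A | (l.map card).sum ≤ R} : ℝ) ≤ x ^ R * q ^ #A := by
  have hx₀ : 0 < x := zero_lt_one.trans_le hx
  calc (#{l ∈ chainsFrom N k A | (l.map card).sum ≤ R} : ℝ)
      = ∑ l ∈ chainsFrom N k A with (l.map card).sum ≤ R, 1 := by simp
    _ ≤ ∑ l ∈ chainsFrom N k A with (l.map card).sum ≤ R, x ^ R * x⁻¹ ^ (l.map card).sum := by
        gcongr with l hl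
        calc (1 : ℝ) = x ^ (l.map card).sum * x⁻¹ ^ (l.map card).sum := by
              rw [← mul_pow, mul_inv_cancel₀ hx₀.ne', one_pow]
          _ ≤ x ^ R * x⁻¹ ^ (l.map card).sum := by
              gcongr
              exact (mem_filter.1 hl).2
    _ ≤ ∑ l ∈ chainsFrom N k A, x ^ R * x⁻¹ ^ (l.map card).sum :=
        sum_le_sum_of_subset_of_nonneg (filter_subset _ _) fun _ _ _ => by positivity
    _ ≤ x ^ R * q ^ #A := by
        rw [← mul_sum]
        gcongr
        exact sum_inv_pow_chainsFrom_le hN hx₀ hq hqx k A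

end ChainCount

theorem limsup_log_div_le_log {a : ℕ → ℝ} {x C : ℝ} (hx : 0 < x) (ha : ∀ R, 1 ≤ a R)
    (haC : ∀ R, a R ≤ x ^ R * C) :
    limsup (fun R : ℕ => Real.log (a R) / R) atTop ≤ Real.log x := by
  have hC : 0 < C := zero_lt_one.trans_le (by simpa using (ha 0).trans (haC 0))
  have hbound : ∀ᶠ R : ℕ in atTop, Real.log (a R) / R ≤ Real.log C / R + Real.log x := by
    filter_upwards [eventually_gt_atTop 0] with R hR
    have hR' : (0 : ℝ) < R := Nat.cast_pos.2 hR
    rw [div_add' _ _ _ hR'.ne', div_le_div_iff_of_pos_right hR']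
    calc Real.log (a R) ≤ Real.log (x ^ R * C) :=
          Real.log_le_log (zero_lt_one.trans_le (ha R)) (haC R)
      _ = Real.log C + Real.log x * R := by
          rw [Real.log_mul (by positivity) hC.ne', Real.log_pow]
          ring
  have hlim : Tendsto (fun R : ℕ => Real.log C / R + Real.log x) atTop
      (nhds (Real.log x)) := by
    simpa using (tendsto_const_div_atTop_nhds_zero_nat (Real.log C)).add_const (Real.log x)
  calc limsup (fun R : ℕ => Real.log (a R) / R) atTop
      ≤ limsup (fun R : ℕ => Real.log C / R + Real.log x) atTop :=
        limsup_le_limsup hbound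
          (isCoboundedUnder_le_of_le _ fun R =>
            div_nonneg (Real.log_nonneg (ha R)) R.cast_nonneg)
          hlim.isBoundedUnder_le
    _ = Real.log x := hlim.limsup_eq

theorem one_mem_ball {G : Type*} [Group G] (S : Set G) (R : ℕ) : (1 : G) ∈ ball S R :=
  ⟨[], by simp, by simp, rfl⟩

section RightAngledArtinGroup

variable {V : Type*} {Θ : SimpleGraph V}

theorem commute_of_adj {v w : V} (h : Θ.Adj v w) :
    Commute (PresentedGroup.of (rels := raagRels Θ) v) (PresentedGroup.of w) := by
  have := PresentedGroup.one_of_mem (rels := raagRels Θ) ⟨v, w, h, rfl⟩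
  simp only [map_mul, map_inv] at this
  rwa [← commutatorElement_eq_one_iff_commute, commutatorElement_def]

variable (Θ) in
def raagLetter (a : V × Bool) : RAAG Θ :=
  if a.2 then PresentedGroup.of a.1 else (PresentedGroup.of a.1)⁻¹

theorem commute_raagLetter {a b : V × Bool} (h : Θ.Adj a.1 b.1) :
    Commute (raagLetter Θ a) (raagLetter Θ b) := by
  have := commute_of_adj h
  unfold raagLetter
  split_ifs
  exacts [this, this.inv_right, this.inv_left, this.inv_inv]

theorem exists_word_of_mem_ball {R : ℕ} {g : RAAG Θ} (hg : g ∈ ball (raagGens Θ) R) :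
    ∃ w : List (V × Bool), w.length ≤ R ∧ (w.map (raagLetter Θ)).prod = g := by
  obtain ⟨l, hlen, hmem, rfl⟩ := hg
  obtain ⟨w, rfl⟩ : l ∈ Set.range (List.map (raagLetter Θ)) := by
    rw [Set.range_list_map]
    intro t ht
    rcases hmem t ht with ⟨v, rfl⟩ | ⟨v, hv⟩
    · exact ⟨(v, true), rfl⟩
    · exact ⟨(v, false), by simp [raagLetter, hv]⟩
  exact ⟨w, by simpa using hlen, rfl⟩

variable [Fintype V] [DecidableEq V] [DecidableRel Θ.Adj]

variable (Θ) in
def nonAdjLetters (E : Finset (V × Bool)) : Finset (V × Bool) :=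
  E.biUnion fun b => {a | ¬Θ.Adj a.1 b.1}

theorem card_filter_not_adj_le {c₀ : ℕ} (hdeg : ∀ v : V, ((Θᶜ).neighborSet v).ncard ≤ c₀)
    (v : V) : #{x | ¬Θ.Adj x v} ≤ c₀ + 1 := by
  have hsub : ({x | ¬Θ.Adj x v} : Finset V) ⊆ insert v ((Θᶜ).neighborFinset v) := by
    intro x hx
    by_cases hxv : x = v
    · simp [hxv]
    · refine mem_insert_of_mem ?_
      rw [SimpleGraph.mem_neighborFinset, SimpleGraph.compl_adj]
      exact ⟨Ne.symm hxv, fun h => (mem_filter.1 hx).2 h.symm⟩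
  calc #{x | ¬Θ.Adj x v} ≤ #((Θᶜ).neighborFinset v) + 1 :=
        (card_le_card hsub).trans (card_insert_le _ _)
    _ ≤ c₀ + 1 := by
        rw [SimpleGraph.neighborFinset_def, ← Set.ncard_eq_toFinset_card']
        exact Nat.add_le_add_right (hdeg v) 1

theorem card_nonAdjLetters_le {c₀ : ℕ} (hdeg : ∀ v : V, ((Θᶜ).neighborSet v).ncard ≤ c₀)
    (E : Finset (V × Bool)) : #(nonAdjLetters Θ E) ≤ 2 * (c₀ + 1) * #E := by
  rw [mul_comm]
  refine card_biUnion_le_card_mul _ _ _ fun b _ => ?_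
  have hprod : ({a | ¬Θ.Adj a.1 b.1} : Finset (V × Bool)) =
      ({x | ¬Θ.Adj x b.1} : Finset V) ×ˢ (univ : Finset Bool) := by
    ext
    simp
  rw [hprod, card_product, card_univ, Fintype.card_bool, mul_comm]
  exact Nat.mul_le_mul_left 2 (card_filter_not_adj_le hdeg b.1)

theorem ball_subset_image_chainsFrom (R : ℕ) :
    ball (raagGens Θ) R ⊆ blocksProd (raagLetter Θ) ''
      ↑{l ∈ chainsFrom (nonAdjLetters Θ) R univ | (l.map card).sum ≤ R} := by
  intro g hg
  obtain ⟨w, hlen, rfl⟩ := exists_word_of_mem_ball hg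
  obtain ⟨l, hne, hchain, hsum, hprod⟩ :=
    exists_finset_blocks (dep := fun a b => ¬Θ.Adj a.1 b.1) (fun a => Θ.irrefl)
      (raagLetter Θ) (fun a b h => commute_raagLetter (not_not.1 h)) w
  have hlength : l.length ≤ (l.map card).sum := by
    simpa using List.length_le_sum_of_one_le (l.map card)
      (by simpa using fun E hE => (hne E hE).card_pos)
  refine ⟨l, mem_filter.2 ⟨mem_chainsFrom (by omega) hne ?_ ?_, by omega⟩, hprod⟩
  · exact fun E _ => subset_univ E
  · exact hchain.imp fun E E' h u hu => by simpa [nonAdjLetters] using h u hu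

end RightAngledArtinGroup

section BallCount

variable {V : Type*} [Fintype V] {Θ : SimpleGraph V}

theorem finite_ball (R : ℕ) : (ball (raagGens Θ) R).Finite := by
  classical
  exact ((finite_toSet _).image _).subset (ball_subset_image_chainsFrom R)

theorem ncard_ball_le {c₀ : ℕ} (hdeg : ∀ v : V, ((Θᶜ).neighborSet v).ncard ≤ c₀) (R : ℕ) :
    ((ball (raagGens Θ) R).ncard : ℝ) ≤
      (((2 * (c₀ + 1) : ℕ) : ℝ) * Real.exp 1) ^ R *
        (1 + ((2 * (c₀ + 1) : ℕ) : ℝ)⁻¹) ^ Fintype.card (V × Bool) := by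
  classical
  set d := 2 * (c₀ + 1)
  have hd : (1 : ℝ) ≤ d := by
    norm_cast
    omega
  have hcard : (ball (raagGens Θ) R).ncard ≤
      #{l ∈ chainsFrom (nonAdjLetters Θ) R univ | (l.map card).sum ≤ R} :=
    (Set.ncard_le_ncard (ball_subset_image_chainsFrom R)).trans
      ((Set.ncard_image_le (finite_toSet _)).trans_eq (Set.ncard_coe_finset _))
  have hqx : (1 + (d : ℝ)⁻¹) ^ d ≤ d * Real.exp 1 * (1 + (d : ℝ)⁻¹ - 1) := by
    rw [add_sub_cancel_left, mul_right_comm, mul_inv_cancel₀ (by positivity), one_mul]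
    exact Real.one_add_inv_pow_le_exp
  calc ((ball (raagGens Θ) R).ncard : ℝ)
      ≤ #{l ∈ chainsFrom (nonAdjLetters Θ) R univ | (l.map card).sum ≤ R} := by
        exact_mod_cast hcard
    _ ≤ _ := by
        rw [← card_univ]
        exact card_filter_chainsFrom_le (card_nonAdjLetters_le hdeg)
          (one_le_mul_of_one_le_of_one_le hd (Real.one_le_exp zero_le_one))
          (le_add_of_nonneg_right (by positivity)) hqx R R univ

end BallCount

/-- If every vertex of the complementary graph `Θᶜ` has degree at most `c₀`, then
the growth rate of `A(Θ)` relative to the standard generating set is at most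
`log (2c₀ + 2) + 1`. -/
theorem raag_growth_le {V : Type*} [Fintype V] (Θ : SimpleGraph V) (c₀ : ℕ)
    (hdeg : ∀ v : V, ((Θᶜ).neighborSet v).ncard ≤ c₀) :
    Filter.limsup
        (fun R : ℕ => Real.log ((ball (raagGens Θ) R).ncard) / R) Filter.atTop
      ≤ Real.log (2 * (c₀ : ℝ) + 2) + 1 := by
  have hone : ∀ R, (1 : ℝ) ≤ (ball (raagGens Θ) R).ncard := fun R => by
    exact_mod_cast (Set.ncard_pos (finite_ball R)).2 ⟨1, one_mem_ball _ R⟩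
  refine (limsup_log_div_le_log (by positivity) hone (ncard_ball_le hdeg)).trans_eq ?_
  rw [Real.log_mul (by positivity) (Real.exp_pos 1).ne', Real.log_exp]
  push_cast
  ring_nf
end

section
/- Let F_n be the free group on basis a_1, …, a_n with n ≥ 2, and let S ⊆ Aut(F_n) be the set of local Nielsen generators (inversions I_i for 1 ≤ i ≤ n, transpositions P_i and multiplications M_i for 1 ≤ i ≤ n−1). Then limsup_{R→∞} (log #B_R(Aut(F_n), S))/R ≤ log 16 + 1. -/
/-- The set of local Nielsen generators of `Aut(F_n)`: the inversions `I_i` for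
`1 ≤ i ≤ n`, and the transpositions `P_i` and multiplications `M_i` for `1 ≤ i ≤ n-1`.
An automorphism of the free group is determined by its values on the basis, so each
generator is characterized by its action on the basis elements. -/
def localNielsen (n : ℕ) : Set (MulAut (FreeGroup (Fin n))) :=
  {φ | -- inversions I_i
      (∃ i : Fin n, ∀ j : Fin n,
        φ (FreeGroup.of j) = if j = i then (FreeGroup.of j)⁻¹ else FreeGroup.of j)
    ∨ -- transpositions P_i
      (∃ i : Fin n, ∃ h : (i : ℕ) + 1 < n, ∀ j : Fin n,
        φ (FreeGroup.of j) =
          if j = i then FreeGroup.of ⟨(i : ℕ) + 1, h⟩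
          else if j = ⟨(i : ℕ) + 1, h⟩ then FreeGroup.of i
          else FreeGroup.of j)
    ∨ -- multiplications M_i
      (∃ i : Fin n, ∃ h : (i : ℕ) + 1 < n, ∀ j : Fin n,
        φ (FreeGroup.of j) =
          if j = i then FreeGroup.of i * FreeGroup.of ⟨(i : ℕ) + 1, h⟩
          else FreeGroup.of j)}

/-!
Label each local Nielsen generator and each inverse of one by a position `i < n` and one of
four types (`I_i`, `P_i`, `M_i`, `M_i⁻¹`). Such an automorphism moves only `a_i` and `a_{i+1}`,
so two of them commute as soon as their positions differ by at least two. Insertion sort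
therefore rewrites every word of length `m` into one whose positions `p_0, …, p_{m-1}` drop
by at most one at each step. Then `k ↦ p_k + 2k` is strictly increasing with values below
`n + 2m`, so the sorted word is determined by its types and a subset of `{0, …, n + 2m - 1}`.
Hence `#B_R ≤ ∑_{m ≤ R} 4^m 2^(n+2m) < 2^n 16^(R+1)`, and the growth rate is at most `log 16`.
-/

namespace List

theorem encard_setOf_length_eq {α : Type*} [Fintype α] (m : ℕ) :
    {l : List α | l.length = m}.encard = (Fintype.card α ^ m : ℕ) := by
  rw [Set.encard, ← card_vector]
  exact ENat.card_eq_coe_fintype_card (α := List.Vector α m)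

variable {α : Type*} (r : α → α → Prop) [DecidableRel r]

theorem IsChain.orderedInsert (htot : ∀ a b, r a b ∨ r b a) (a : α) :
    ∀ {l : List α}, l.IsChain r → (l.orderedInsert r a).IsChain r
  | [], _ => isChain_singleton a
  | [b], _ => by
    by_cases hab : r a b
    · simp [hab]
    · simp [hab, (htot a b).resolve_left hab]
  | b :: c :: l, hl => by
    by_cases hab : r a b
    · simp only [orderedInsert_cons, hab, if_true]
      exact isChain_cons_cons.2 ⟨hab, hl⟩
    have hba := (htot a b).resolve_left hab
    have ih := IsChain.orderedInsert htot a hl.tail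
    rw [orderedInsert_cons, if_neg hab]
    by_cases hac : r a c
    · simp only [tail_cons, orderedInsert_cons, hac, if_true] at ih ⊢
      exact isChain_cons_cons.2 ⟨hba, ih⟩
    · simp only [tail_cons, orderedInsert_cons, hac, if_false] at ih ⊢
      exact isChain_cons_cons.2 ⟨(isChain_cons_cons.1 hl).1, ih⟩

theorem isChain_insertionSort (htot : ∀ a b, r a b ∨ r b a) :
    ∀ l : List α, (l.insertionSort r).IsChain r
  | [] => isChain_nil
  | a :: l => (isChain_insertionSort htot l).orderedInsert r htot a

variable {M : Type*} [Monoid M] {f : α → M}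

theorem prod_map_orderedInsert (hf : ∀ a b, ¬ r a b → Commute (f a) (f b)) (a : α) :
    ∀ l : List α, ((l.orderedInsert r a).map f).prod = f a * (l.map f).prod
  | [] => by simp
  | b :: l => by
    by_cases hab : r a b
    · simp [hab]
    · simp [hab, prod_map_orderedInsert hf a l, (hf a b hab).left_comm]

theorem prod_map_insertionSort (hf : ∀ a b, ¬ r a b → Commute (f a) (f b)) :
    ∀ l : List α, ((l.insertionSort r).map f).prod = (l.map f).prod
  | [] => rfl
  | a :: l => by simp [prod_map_orderedInsert r hf, prod_map_insertionSort hf l]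

end List

section NormalForm

variable {K : Type*}

def CanPrecede (a b : ℕ × K) : Prop :=
  a.1 ≤ b.1 + 1

instance : DecidableRel (CanPrecede (K := K)) :=
  fun a b => inferInstanceAs (Decidable (a.1 ≤ b.1 + 1))

theorem canPrecede_total (a b : ℕ × K) : CanPrecede a b ∨ CanPrecede b a := by
  unfold CanPrecede; omega

/-- `slots 0 w` lists the numbers `p_k + 2k`, where `p_k` is the position of the `k`-th letter. -/
def slots : ℕ → List (ℕ × K) → List ℕ
  | _, [] => []
  | s, a :: w => (a.1 + s) :: slots (s + 2) w

theorem isChain_lt_slots :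
    ∀ (s : ℕ) {w : List (ℕ × K)}, w.IsChain CanPrecede → (slots s w).IsChain (· < ·)
  | _, [], _ => List.isChain_nil
  | _, [_], _ => List.isChain_singleton _
  | s, a :: b :: w, hw => by
    have ih := isChain_lt_slots (s + 2) hw.tail
    have hab : a.1 ≤ b.1 + 1 := (List.isChain_cons_cons.1 hw).1
    simp only [slots, List.tail_cons] at ih ⊢
    exact List.isChain_cons_cons.2 ⟨by omega, ih⟩

theorem lt_of_mem_slots {n : ℕ} : ∀ (s : ℕ) {w : List (ℕ × K)}, (∀ a ∈ w, a.1 < n) →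
    ∀ x ∈ slots s w, x < n + s + 2 * w.length
  | _, [], _, _, hx => by simp [slots] at hx
  | s, a :: w, hw, x, hx => by
    simp only [slots, List.mem_cons] at hx
    rcases hx with rfl | hx
    · have := hw a List.mem_cons_self
      rw [List.length_cons]; omega
    · have := lt_of_mem_slots (s + 2) (fun b hb => hw b (List.mem_cons_of_mem a hb)) x hx
      rw [List.length_cons]; omega

theorem eq_of_slots_eq_of_map_snd_eq : ∀ (s : ℕ) {w w' : List (ℕ × K)},
    slots s w = slots s w' → w.map Prod.snd = w'.map Prod.snd → w = w'
  | _, [], [], _, _ => rfl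
  | s, a :: w, a' :: w', h, h' => by
    simp only [slots, List.cons.injEq, add_left_inj, List.map_cons] at h h'
    rw [eq_of_slots_eq_of_map_snd_eq (s + 2) h.2 h'.2, Prod.ext h.1 h'.1]

def normalForms (n m : ℕ) : Set (List (ℕ × K)) :=
  {w | w.length = m ∧ (∀ a ∈ w, a.1 < n) ∧ w.IsChain CanPrecede}

theorem encard_normalForms_le [Fintype K] (n m : ℕ) :
    (normalForms n m : Set (List (ℕ × K))).encard ≤
      (Fintype.card K ^ m * 2 ^ (n + 2 * m) : ℕ) := by
  let code (w : List (ℕ × K)) : List K × Finset ℕ := (w.map Prod.snd, (slots 0 w).toFinset)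
  have hmaps : Set.MapsTo code (normalForms n m)
      ({l | l.length = m} ×ˢ ((Finset.range (n + 2 * m)).powerset : Set (Finset ℕ))) := by
    rintro w ⟨hlen, hpos, -⟩
    refine ⟨by simp [code, hlen], Finset.mem_coe.2 (Finset.mem_powerset.2 fun x hx => ?_)⟩
    simpa [hlen] using lt_of_mem_slots 0 hpos x (List.mem_toFinset.1 hx)
  have hinj : Set.InjOn code (normalForms n m) := by
    rintro w ⟨-, -, hw⟩ w' ⟨-, -, hw'⟩ h
    simp only [code, Prod.mk.injEq] at h
    refine eq_of_slots_eq_of_map_snd_eq 0 ?_ h.1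
    refine List.SortedLT.eq_of_mem_iff (List.sortedLT_iff_isChain.2 (isChain_lt_slots 0 hw))
      (List.sortedLT_iff_isChain.2 (isChain_lt_slots 0 hw')) fun x => ?_
    rw [← List.mem_toFinset, h.2, List.mem_toFinset]
  calc (normalForms n m).encard ≤ _ := Set.encard_le_encard_of_injOn hmaps hinj
    _ = _ := by
      rw [Set.encard_prod, List.encard_setOf_length_eq, Set.encard_coe_eq_coe_finsetCard]
      simp

end NormalForm

section Ball

variable {G K : Type*} [Group G] {S : Set G} {n : ℕ} (gen : ℕ × K → G)

theorem ball_subset_biUnion_image_normalForms (hS : S ∪ S⁻¹ ⊆ gen '' {a | a.1 < n})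
    (hcomm : ∀ a b, a.1 + 2 ≤ b.1 → Commute (gen a) (gen b)) (R : ℕ) :
    ball S R ⊆
      ⋃ m ∈ Finset.range (R + 1), (fun w => (w.map gen).prod) '' normalForms n m := by
  rintro _ ⟨l, hlen, hl, rfl⟩
  obtain ⟨w, rfl⟩ :
      l ∈ Set.range (List.map (gen ∘ Subtype.val : {a // a.1 < n} → G)) := by
    rw [Set.range_list_map]
    intro g hg
    obtain ⟨a, ha, rfl⟩ := hS (hl g hg)
    exact ⟨⟨a, ha⟩, rfl⟩
  refine Set.mem_biUnion (x := w.length) (by simpa [Nat.lt_succ_iff] using hlen)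
    ⟨(w.map Subtype.val).insertionSort CanPrecede, ⟨by simp, ?_,
      List.isChain_insertionSort _ canPrecede_total _⟩, ?_⟩
  · simp only [List.mem_insertionSort, List.mem_map]
    rintro _ ⟨a, -, rfl⟩
    exact a.2
  · refine (List.prod_map_insertionSort _ (fun a b hab => ?_) _).trans (by rw [List.map_map])
    exact (hcomm b a (by unfold CanPrecede at hab; omega)).symm

open Finset in
theorem ncard_ball_le_of_commute_of_add_two_le [Fintype K]
    (hS : S ∪ S⁻¹ ⊆ gen '' {a | a.1 < n})
    (hcomm : ∀ a b, a.1 + 2 ≤ b.1 → Commute (gen a) (gen b)) (R : ℕ) :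
    (ball S R).ncard ≤ ∑ m ∈ range (R + 1), Fintype.card K ^ m * 2 ^ (n + 2 * m) := by
  let evalWord (w : List (ℕ × K)) : G := (w.map gen).prod
  refine ENat.toNat_le_of_le_natCast ?_
  calc (ball S R).encard ≤ (⋃ m ∈ range (R + 1), evalWord '' normalForms n m).encard :=
        Set.encard_le_encard (ball_subset_biUnion_image_normalForms gen hS hcomm R)
    _ ≤ ∑ m ∈ range (R + 1), (evalWord '' normalForms n m).encard := set_encard_biUnion_le _ _
    _ ≤ ∑ m ∈ range (R + 1), (normalForms n m : Set (List (ℕ × K))).encard :=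
        sum_le_sum fun m _ => Set.encard_image_le _ _
    _ ≤ _ := by
      push_cast
      exact sum_le_sum fun m _ => by exact_mod_cast encard_normalForms_le n m

end Ball

open Filter Real in
theorem limsup_log_div_le_log_s2 {a : ℕ → ℕ} {C b : ℕ} (hC : 0 < C) (hb : 0 < b)
    (h : ∀ R, a R ≤ C * b ^ R) :
    limsup (fun R : ℕ => log (a R) / R) atTop ≤ log b := by
  have hbound : ∀ R : ℕ, 0 < R → log (a R) / R ≤ log C / R + log b := by
    intro R hR
    rw [div_add' _ _ _ (by positivity), div_le_div_iff_of_pos_right (by positivity)]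
    rcases Nat.eq_zero_or_pos (a R) with ha | ha
    · rw [ha, Nat.cast_zero, log_zero]
      positivity
    · calc log (a R) ≤ log ((C * b ^ R : ℕ) : ℝ) :=
            log_le_log (by exact_mod_cast ha) (by exact_mod_cast h R)
        _ = log C + log b * R := by
          push_cast; rw [log_mul (by positivity) (by positivity), log_pow, mul_comm]
  have hlim : Tendsto (fun R : ℕ => log C / R + log b) atTop (nhds (log b)) := by
    simpa using (tendsto_const_div_atTop_nhds_zero_nat (log C)).add_const (log b)
  calc limsup (fun R : ℕ => log (a R) / R) atTop
      ≤ limsup (fun R : ℕ => log C / R + log b) atTop :=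
        limsup_le_limsup (eventually_atTop.2 ⟨1, fun R hR => hbound R hR⟩)
          (isCoboundedUnder_le_of_le atTop fun R =>
            div_nonneg (log_natCast_nonneg _) R.cast_nonneg)
          hlim.isBoundedUnder_le
    _ = log b := hlim.limsup_eq

namespace FreeGroup

variable {α : Type*}

theorem mulAut_ext {φ ψ : MulAut (FreeGroup α)} (h : ∀ a, φ (of a) = ψ (of a)) : φ = ψ :=
  MulEquiv.toMonoidHom_injective (ext_hom _ _ h)

def IsSupportedOn (φ : MulAut (FreeGroup α)) (A : Set α) : Prop :=
  (∀ a ∉ A, φ (of a) = of a) ∧ ∀ a ∈ A, φ (of a) ∈ Subgroup.closure (of '' A)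

theorem IsSupportedOn.eqOn_closure {φ : MulAut (FreeGroup α)} {A B : Set α}
    (hφ : IsSupportedOn φ A) (hAB : Disjoint A B) :
    Set.EqOn φ id (Subgroup.closure (of '' B)) := by
  refine MonoidHom.eqOn_closure (f := φ.toMonoidHom) (g := MonoidHom.id _) ?_
  rintro _ ⟨b, hb, rfl⟩
  exact hφ.1 b (hAB.notMem_of_mem_right hb)

theorem IsSupportedOn.commute {φ ψ : MulAut (FreeGroup α)} {A B : Set α}
    (hφ : IsSupportedOn φ A) (hψ : IsSupportedOn ψ B) (hAB : Disjoint A B) :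
    Commute φ ψ := by
  refine mulAut_ext fun a => ?_
  show φ (ψ (of a)) = ψ (φ (of a))
  by_cases ha : a ∈ A
  · rw [hψ.1 a (hAB.notMem_of_mem_left ha), hψ.eqOn_closure hAB.symm (hφ.2 a ha), id]
  by_cases hb : a ∈ B
  · rw [hφ.1 a ha, hφ.eqOn_closure hAB (hψ.2 a hb), id]
  · rw [hφ.1 a ha, hψ.1 a hb, hφ.1 a ha]

end FreeGroup

section Nielsen

open FreeGroup

variable {n : ℕ}

/-- Types `0, 1, 2, 3` stand for `I_i, P_i, M_i, M_i⁻¹`; at the last position `i = n - 1`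
types `1, 2, 3` give the identity, so that every label names an automorphism. -/
def nielsenImage (i : ℕ) (t : Fin 4) (j : Fin n) : FreeGroup (Fin n) :=
  if hj : (j : ℕ) = i + 1 then
    if t = 1 then of ⟨i, by omega⟩ else of j
  else if (j : ℕ) = i then
    if h : i + 1 < n then
      ![(of j)⁻¹, of ⟨i + 1, h⟩, of j * of ⟨i + 1, h⟩, of j * (of ⟨i + 1, h⟩)⁻¹] t
    else if t = 0 then (of j)⁻¹ else of j
  else of j

theorem lift_nielsenImage_swap (i : ℕ) (t : Fin 4) (j : Fin n) :
    lift (nielsenImage i (Equiv.swap 2 3 t)) (nielsenImage i t j) = of j := by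
  obtain ⟨j, hj⟩ := j
  by_cases hj1 : j = i + 1
  · subst hj1
    fin_cases t <;> simp [nielsenImage, Equiv.swap_apply_def, hj]
  by_cases hj0 : j = i
  · subst hj0
    by_cases hi : j + 1 < n <;> fin_cases t <;> simp [nielsenImage, Equiv.swap_apply_def, hi]
  · fin_cases t <;> simp [nielsenImage, hj1, hj0]

def nielsenAut (i : ℕ) (t : Fin 4) : MulAut (FreeGroup (Fin n)) :=
  MonoidHom.toMulEquiv (lift (nielsenImage i t)) (lift (nielsenImage i (Equiv.swap 2 3 t)))
    (ext_hom _ _ fun j => by simp [lift_nielsenImage_swap])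
    (ext_hom _ _ fun j => by simpa using lift_nielsenImage_swap i (Equiv.swap 2 3 t) j)

@[simp]
theorem nielsenAut_apply_of (i : ℕ) (t : Fin 4) (j : Fin n) :
    nielsenAut i t (of j) = nielsenImage i t j :=
  lift_apply_of

theorem nielsenAut_inv (i : ℕ) (t : Fin 4) :
    (nielsenAut i t : MulAut (FreeGroup (Fin n)))⁻¹ = nielsenAut i (Equiv.swap 2 3 t) :=
  mulAut_ext fun _ => rfl

theorem exists_nielsenAut_eq_of_mem_localNielsen {φ : MulAut (FreeGroup (Fin n))}
    (hφ : φ ∈ localNielsen n) : ∃ i < n, ∃ t, nielsenAut i t = φ := by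
  rcases hφ with ⟨⟨i, hi⟩, hφ⟩ | ⟨⟨i, hi⟩, hi1, hφ⟩ | ⟨⟨i, hi⟩, hi1, hφ⟩
  · refine ⟨i, hi, 0, mulAut_ext fun ⟨j, hj⟩ => ?_⟩
    rw [hφ]
    by_cases hji : j = i
    · subst hji; simp [nielsenImage]
    · simp [nielsenImage, hji, Fin.ext_iff]
  · refine ⟨i, hi, 1, mulAut_ext fun ⟨j, hj⟩ => ?_⟩
    rw [hφ]
    by_cases hji : j = i
    · subst hji; simp [nielsenImage, hi1]
    by_cases hji1 : j = i + 1
    · subst hji1; simp [nielsenImage]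
    · simp [nielsenImage, hji, hji1, Fin.ext_iff]
  · refine ⟨i, hi, 2, mulAut_ext fun ⟨j, hj⟩ => ?_⟩
    rw [hφ]
    by_cases hji : j = i
    · subst hji; simp [nielsenImage, hi1]
    by_cases hji1 : j = i + 1
    · subst hji1; simp [nielsenImage]
    · simp [nielsenImage, hji, hji1, Fin.ext_iff]

theorem isSupportedOn_nielsenAut (i : ℕ) (t : Fin 4) :
    IsSupportedOn (nielsenAut i t : MulAut (FreeGroup (Fin n)))
      {j | (j : ℕ) = i ∨ (j : ℕ) = i + 1} := by
  have hof : ∀ j : Fin n, ((j : ℕ) = i ∨ (j : ℕ) = i + 1) →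
      of j ∈ Subgroup.closure (of '' {j : Fin n | (j : ℕ) = i ∨ (j : ℕ) = i + 1}) :=
    fun j hj => Subgroup.subset_closure ⟨j, hj, rfl⟩
  refine ⟨fun ⟨j, hj⟩ hji => ?_, fun ⟨j, hj⟩ hji => ?_⟩
  · simp only [Set.mem_ofPred_eq, not_or] at hji
    simp [nielsenImage, hji.1, hji.2]
  · rcases hji with rfl | rfl
    · by_cases hi : j + 1 < n <;> fin_cases t <;> simp [nielsenImage, hi] <;>
        apply_rules [Subgroup.mul_mem, Subgroup.inv_mem, hof] <;> simp
    · fin_cases t <;> simp [nielsenImage] <;> apply hof <;> simp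

theorem ncard_ball_localNielsen_le (n R : ℕ) :
    (ball (localNielsen n) R).ncard ≤ 16 * 2 ^ n * 16 ^ R := by
  have hS : localNielsen n ∪ (localNielsen n)⁻¹ ⊆
      (fun a : ℕ × Fin 4 => nielsenAut a.1 a.2) '' {a | a.1 < n} := by
    rintro φ (hφ | hφ)
    · obtain ⟨i, hi, t, rfl⟩ := exists_nielsenAut_eq_of_mem_localNielsen hφ
      exact ⟨(i, t), hi, rfl⟩
    · obtain ⟨i, hi, t, ht⟩ := exists_nielsenAut_eq_of_mem_localNielsen hφ
      refine ⟨(i, Equiv.swap 2 3 t), hi, ?_⟩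
      rw [← inv_inv φ, ← ht, nielsenAut_inv]
  have hcomm : ∀ a b : ℕ × Fin 4, a.1 + 2 ≤ b.1 →
      Commute (nielsenAut a.1 a.2 : MulAut (FreeGroup (Fin n))) (nielsenAut b.1 b.2) :=
    fun a b hab => (isSupportedOn_nielsenAut a.1 a.2).commute (isSupportedOn_nielsenAut b.1 b.2)
      (Set.disjoint_left.2 fun j hja hjb => by simp only [Set.mem_ofPred_eq] at hja hjb; omega)
  calc (ball (localNielsen n) R).ncard
      ≤ ∑ m ∈ Finset.range (R + 1), Fintype.card (Fin 4) ^ m * 2 ^ (n + 2 * m) :=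
        ncard_ball_le_of_commute_of_add_two_le _ hS hcomm R
    _ = 2 ^ n * ∑ m ∈ Finset.range (R + 1), 16 ^ m := by
      rw [Finset.mul_sum]
      refine Finset.sum_congr rfl fun m _ => ?_
      rw [Fintype.card_fin, pow_add, pow_mul, show (16 : ℕ) = 4 * 2 ^ 2 by rfl, mul_pow]
      ring
    _ ≤ 2 ^ n * 16 ^ (R + 1) :=
      Nat.mul_le_mul_left _ (Nat.geomSum_lt (by norm_num) fun _ => Finset.mem_range.1).le
    _ = 16 * 2 ^ n * 16 ^ R := by ring

end Nielsen

theorem autFreeGroup_growth_le_general (n : ℕ) :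
    Filter.limsup
        (fun R : ℕ => Real.log ((ball (localNielsen n) R).ncard) / R) Filter.atTop
      ≤ Real.log 16 + 1 := by
  have h := limsup_log_div_le_log_s2 (by positivity) (by norm_num) (ncard_ball_localNielsen_le n)
  push_cast at h
  linarith

/-- The growth rate of `Aut(F_n)` relative to the local Nielsen generators is at most
`log 16 + 1`. -/
theorem autFreeGroup_growth_le (n : ℕ) (hn : 2 ≤ n) :
    Filter.limsup
        (fun R : ℕ => Real.log ((ball (localNielsen n) R).ncard) / R) Filter.atTop
      ≤ Real.log 16 + 1 :=
  autFreeGroup_growth_le_general n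
end

section
/- Let Θ be a finite simple graph with vertex set V of cardinality n ≥ 1, and suppose that every vertex of the complementary graph Θ̄ has degree at most c₀ ≥ 1. Let A(Θ) be the associated right-angled Artin group with standard generating set S = {s_v : v ∈ V}. Then for every positive integer R there is an injection of B_R(A(Θ), S) into W_R(n, c₀); in particular #B_R(A(Θ), S) ≤ #W_R(n, c₀). -/
/-- `D_R = {±1, ±2, …, ±C_R, C_R + 1} ⊆ ℤ` where `C_R = n + c₀ R`. -/
def DSet (n c₀ R : ℕ) : Set ℤ :=
  {x | (1 ≤ |x| ∧ |x| ≤ (n : ℤ) + c₀ * R) ∨ x = (n : ℤ) + c₀ * R + 1}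

/-- `W_R(n, c₀)`: sequences `(ℓ_1, …, ℓ_R)` with entries in `D_R` whose absolute
values are nondecreasing. -/
def WSet (n c₀ R : ℕ) : Set (Fin R → ℤ) :=
  {ℓ | (∀ i, ℓ i ∈ DSet n c₀ R) ∧ ∀ i j : Fin R, i ≤ j → |ℓ i| ≤ |ℓ j|}

/-!
Write an element of the ball as a word of length at most `R` in the letters `s_v^{±1}`, and keep
a labelling of `V` by `0, …, n - 1`, i.e. a list enumerating `V`. Rearrange the word greedily:
among the letters that can be commuted to the front, take one whose vertex has the least label,
record it at step `j` as `±(label + 1 + c₀ j)`, and relabel by moving the at most `c₀` vertices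
that do not commute with it to just before it. The next letter taken either does not commute with
this one, and so was moved to just before it, or could already be brought to the front before, and
so had a label at least as large. Relabelling lowers a label by at most `c₀`, which the offset
`c₀ j` absorbs, so the recorded absolute values are nondecreasing; they lie in `[1, n + c₀ R]`, and
padding with `n + c₀ R + 1` lands in `W_R(n, c₀)`. The record determines the rearranged word
letter by letter, and the rearrangement does not change the group element, whence injectivity.
-/

namespace List

variable {α : Type*}

theorem prod_map_append_cons {M : Type*} [Monoid M] (f : α → M) {a : List α} {t : α}
    (b : List α) (ha : ∀ x ∈ a, Commute (f x) (f t)) :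
    ((a ++ t :: b).map f).prod = f t * ((a ++ b).map f).prod := by
  have : Commute (a.map f).prod (f t) := Commute.list_prod_left _ _ (by simpa using ha)
  simp only [map_append, map_cons, prod_append, prod_cons, ← mul_assoc, this.eq]

theorem eq_of_getD_eq {l₁ l₂ : List α} {d : α} {R : ℕ} (h₁ : l₁.length ≤ R)
    (h₂ : l₂.length ≤ R) (hd₁ : d ∉ l₁) (hd₂ : d ∉ l₂)
    (h : ∀ i < R, l₁.getD i d = l₂.getD i d) : l₁ = l₂ := by
  refine ext_getElem? fun i => ?_
  by_cases hi : i < R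
  · have := h i hi
    rw [getD_eq_getElem?_getD, getD_eq_getElem?_getD] at this
    cases h1 : l₁[i]? <;> cases h2 : l₂[i]? <;> simp only [h1, h2, Option.getD_none,
      Option.getD_some] at this ⊢
    · exact (hd₂ (this ▸ mem_of_getElem? h2)).elim
    · exact (hd₁ (this ▸ mem_of_getElem? h1)).elim
    · rw [this]
  · rw [getElem?_eq_none (by omega), getElem?_eq_none (by omega)]

variable [DecidableEq α]

def moveBefore (p : α → Bool) (l : List α) (a : α) : List α :=
  (l.filter (!p ·)).take ((l.filter (!p ·)).idxOf a) ++ l.filter p ++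
    (l.filter (!p ·)).drop ((l.filter (!p ·)).idxOf a)

theorem moveBefore_perm (p : α → Bool) (l : List α) (a : α) : l.moveBefore p a ~ l := by
  unfold moveBefore
  set rest := l.filter (!p ·)
  calc rest.take (rest.idxOf a) ++ l.filter p ++ rest.drop (rest.idxOf a)
      ~ l.filter p ++ (rest.take (rest.idxOf a) ++ rest.drop (rest.idxOf a)) := by
        rw [append_assoc]; exact perm_append_comm_assoc _ _ _
    _ = l.filter p ++ rest := by rw [take_append_drop]
    _ ~ l := filter_append_perm p l

theorem idxOf_le_idxOf_filter_add {q : α → Bool} {l : List α} {u : α} (hu : u ∈ l)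
    (hqu : q u) : l.idxOf u ≤ (l.filter q).idxOf u + (l.filter (!q ·)).length := by
  induction l with
  | nil => simp at hu
  | cons x l ih =>
    by_cases hxu : x = u
    · subst hxu; simp
    have hu' : u ∈ l := (mem_cons.mp hu).resolve_left (Ne.symm hxu)
    have := ih hu'
    cases hqx : q x <;> simp [hqx, idxOf_cons_ne _ hxu] <;> omega

theorem idxOf_append_le_idxOf_append_append {l₁ l₂ l₃ : List α} {u : α} (hu : u ∉ l₂) :
    (l₁ ++ l₃).idxOf u ≤ (l₁ ++ l₂ ++ l₃).idxOf u := by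
  rw [append_assoc]
  by_cases hu₁ : u ∈ l₁
  · rw [idxOf_append_of_mem hu₁, idxOf_append_of_mem hu₁]
  · rw [idxOf_append_of_notMem hu₁, idxOf_append_of_notMem hu₁, idxOf_append_of_notMem hu]
    omega

variable {p : α → Bool} {l : List α} {a u : α}

theorem idxOf_le_idxOf_moveBefore_add (hu : u ∈ l) (hpu : p u = false) :
    l.idxOf u ≤ (l.moveBefore p a).idxOf u + (l.filter p).length := by
  unfold moveBefore
  set rest := l.filter (!p ·)
  have hfilter : l.idxOf u ≤ rest.idxOf u + (l.filter p).length := by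
    simpa using idxOf_le_idxOf_filter_add (q := (!p ·)) hu (by simp [hpu])
  have hinsert := idxOf_append_le_idxOf_append_append (l₁ := rest.take (rest.idxOf a))
    (l₃ := rest.drop (rest.idxOf a)) (l₂ := l.filter p) (u := u) (by simp [hpu])
  rw [take_append_drop] at hinsert
  omega

theorem idxOf_le_idxOf_moveBefore_add_of_pos (ha : a ∈ l) (hpa : p a = false)
    (hpu : p u = true) :
    l.idxOf a ≤ (l.moveBefore p a).idxOf u + (l.filter p).length := by
  set rest := l.filter (!p ·)
  have hbase : l.idxOf a ≤ rest.idxOf a + (l.filter p).length := by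
    simpa using idxOf_le_idxOf_filter_add (q := (!p ·)) ha (by simp [hpa])
  have hlt : rest.idxOf a < rest.length := idxOf_lt_length_iff.mpr (by simp [rest, ha, hpa])
  have hut : u ∉ rest.take (rest.idxOf a) := fun h => by
    simpa [rest, hpu] using mem_of_mem_take h
  have : (l.moveBefore p a).idxOf u =
      rest.idxOf a + (l.filter p ++ rest.drop (rest.idxOf a)).idxOf u := by
    rw [moveBefore, append_assoc, idxOf_append_of_notMem hut, length_take_of_le hlt.le]
  omega

end List

namespace RAAG

open List

theorem commute_of_not_adj_compl {V : Type*} (Θ : SimpleGraph V) {v u : V} (h : ¬ Θᶜ.Adj v u) :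
    Commute (PresentedGroup.of (rels := raagRels Θ) v) (PresentedGroup.of u) := by
  obtain rfl | hvu := eq_or_ne v u
  · exact Commute.refl _
  have hadj : Θ.Adj v u := by simpa [SimpleGraph.compl_adj, hvu] using h
  rw [← commutatorElement_eq_one_iff_commute, commutatorElement_def]
  exact (QuotientGroup.eq_one_iff _).mpr (Subgroup.subset_normalClosure ⟨v, u, hadj, rfl⟩)

variable {V : Type*} (G : SimpleGraph V)

def CommutesToFront (w : List (V × Bool)) (t : V × Bool) : Prop :=
  ∃ a b, w = a ++ t :: b ∧ ∀ x ∈ a, ¬ G.Adj x.1 t.1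

theorem CommutesToFront.append_cons {a b : List (V × Bool)} {t s : V × Bool}
    (hts : ¬ G.Adj t.1 s.1) (hs : CommutesToFront G (a ++ b) s) :
    CommutesToFront G (a ++ t :: b) s := by
  obtain ⟨a', b', hsplit, ha'⟩ := hs
  rcases append_eq_append_iff.mp hsplit with ⟨c, rfl, rfl⟩ | ⟨c, rfl, hc⟩
  · refine ⟨a ++ t :: c, b', by simp, fun x hx => ?_⟩
    simp only [mem_append, mem_cons] at hx
    rcases hx with hx | rfl | hx
    · exact ha' x (by simp [hx])
    · exact hts
    · exact ha' x (by simp [hx])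
  · cases c with
    | nil =>
      obtain rfl : s :: b' = b := by simpa using hc
      refine ⟨a' ++ [t], b', by simp, fun x hx => ?_⟩
      rcases mem_append.mp hx with hx | hx
      · exact ha' x hx
      · rw [mem_singleton.mp hx]; exact hts
    | cons y c =>
      obtain ⟨rfl, rfl⟩ : s = y ∧ b' = c ++ b := by simpa using hc
      exact ⟨a', c ++ t :: b, by simp, ha'⟩

variable [DecidableEq V]

theorem exists_split_min (l : List V) {w : List (V × Bool)} (hw : w ≠ []) :
    ∃ s : List (V × Bool) × (V × Bool) × List (V × Bool),
      w = s.1 ++ s.2.1 :: s.2.2 ∧ (∀ x ∈ s.1, ¬ G.Adj x.1 s.2.1.1) ∧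
      ∀ t, CommutesToFront G w t → l.idxOf s.2.1.1 ≤ l.idxOf t.1 := by
  have hfin : {t | CommutesToFront G w t}.Finite :=
    w.finite_toSet.subset fun t ⟨a, b, hw, _⟩ => by simp [hw]
  obtain ⟨t₀, w₀, rfl⟩ := exists_cons_of_ne_nil hw
  obtain ⟨t, ⟨a, b, hsplit, ha⟩, hmin⟩ :=
    Set.exists_min_image _ (fun t : V × Bool => l.idxOf t.1) hfin ⟨t₀, [], w₀, rfl, by simp⟩
  exact ⟨(a, t, b), hsplit, ha, hmin⟩

variable [DecidableRel G.Adj]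

def relabel (l : List V) (v : V) : List V :=
  l.moveBefore (G.Adj v ·) v

theorem relabel_perm (l : List V) (v : V) : relabel G l v ~ l :=
  moveBefore_perm _ l v

noncomputable def greedy (l : List V) (w : List (V × Bool)) : List (V × Bool) :=
  if hw : w = [] then [] else
    let s := (exists_split_min G l hw).choose
    s.2.1 :: greedy (relabel G l s.2.1.1) (s.1 ++ s.2.2)
termination_by w.length
decreasing_by
  have h := congrArg length (exists_split_min G l hw).choose_spec.1
  simp only [length_append, length_cons] at h ⊢
  omega

theorem greedy_nil (l : List V) : greedy G l [] = [] := by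
  rw [greedy, dif_pos rfl]

theorem greedy_of_ne_nil (l : List V) {w : List (V × Bool)} (hw : w ≠ []) :
    ∃ a t b, w = a ++ t :: b ∧ (∀ x ∈ a, ¬ G.Adj x.1 t.1) ∧
      (∀ s, CommutesToFront G w s → l.idxOf t.1 ≤ l.idxOf s.1) ∧
      greedy G l w = t :: greedy G (relabel G l t.1) (a ++ b) := by
  obtain ⟨hsplit, ha, hmin⟩ := (exists_split_min G l hw).choose_spec
  exact ⟨_, _, _, hsplit, ha, hmin, by rw [greedy, dif_neg hw]⟩

theorem greedy_induction {P : List V → List (V × Bool) → Prop} (nil : ∀ l, P l [])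
    (cons : ∀ l a t b, (∀ x ∈ a, ¬ G.Adj x.1 t.1) →
      (∀ s, CommutesToFront G (a ++ t :: b) s → l.idxOf t.1 ≤ l.idxOf s.1) →
      greedy G l (a ++ t :: b) = t :: greedy G (relabel G l t.1) (a ++ b) →
      P (relabel G l t.1) (a ++ b) → P l (a ++ t :: b))
    (l : List V) (w : List (V × Bool)) : P l w := by
  induction hn : w.length using Nat.strong_induction_on generalizing l w with
  | _ n ih =>
    rcases eq_or_ne w [] with rfl | hw
    · exact nil l
    obtain ⟨a, t, b, rfl, ha, hmin, hgreedy⟩ := greedy_of_ne_nil G l hw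
    exact cons l a t b ha hmin hgreedy (ih _ (by simp [← hn]) _ _ rfl)

theorem length_greedy (l : List V) (w : List (V × Bool)) :
    (greedy G l w).length = w.length := by
  induction l, w using greedy_induction G with
  | nil l => rw [greedy_nil]
  | cons l a t b _ _ hgreedy ih => simp [hgreedy, ih]; omega

theorem commutesToFront_of_mem_head?_greedy {l : List V} {w : List (V × Bool)}
    {t : V × Bool} (ht : t ∈ (greedy G l w).head?) : CommutesToFront G w t := by
  rcases eq_or_ne w [] with rfl | hw
  · simp [greedy_nil] at ht
  obtain ⟨a, t', b, rfl, ha, -, hgreedy⟩ := greedy_of_ne_nil G l hw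
  obtain rfl : t' = t := by simpa [hgreedy] using ht
  exact ⟨a, b, rfl, ha⟩

theorem prod_map_greedy {M : Type*} [Monoid M] (f : V × Bool → M)
    (hf : ∀ p q, ¬ G.Adj p.1 q.1 → Commute (f p) (f q)) (l : List V) (w : List (V × Bool)) :
    ((greedy G l w).map f).prod = (w.map f).prod := by
  induction l, w using greedy_induction G with
  | nil l => rw [greedy_nil]
  | cons l a t b ha _ hgreedy ih =>
    rw [hgreedy, map_cons, prod_cons, ih, prod_map_append_cons f b fun x hx => hf x t (ha x hx)]

theorem lift_mk_greedy {H : Type*} [Group H] {s : V → H}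
    (hs : ∀ v u, ¬ G.Adj v u → Commute (s v) (s u)) (l : List V) (w : List (V × Bool)) :
    FreeGroup.lift s (FreeGroup.mk (greedy G l w)) = FreeGroup.lift s (FreeGroup.mk w) := by
  simp only [FreeGroup.lift_mk]
  refine prod_map_greedy G _ (fun p q hpq => ?_) l w
  have := hs p.1 q.1 hpq
  cases p.2 <;> cases q.2
  exacts [this.inv_inv, this.inv_left, this.inv_right, this]

theorem length_filter_adj_le_degree [Fintype V] {l : List V} (hl : l.Nodup) (v : V) :
    (l.filter (G.Adj v ·)).length ≤ G.degree v := by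
  rw [← toFinset_card_of_nodup (hl.filter _)]
  exact Finset.card_le_card fun u hu => by simpa using (mem_filter.mp (mem_toFinset.mp hu)).2

theorem idxOf_le_idxOf_relabel_add [Fintype V] {c₀ : ℕ} (hdeg : ∀ v, G.degree v ≤ c₀)
    {l : List V} (hl : l.Nodup) (hmem : ∀ v, v ∈ l) {a b : List (V × Bool)} {t s : V × Bool}
    (hmin : ∀ s, CommutesToFront G (a ++ t :: b) s → l.idxOf t.1 ≤ l.idxOf s.1)
    (hs : CommutesToFront G (a ++ b) s) :
    l.idxOf t.1 ≤ (relabel G l t.1).idxOf s.1 + c₀ := by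
  have hmoved := (length_filter_adj_le_degree G hl t.1).trans (hdeg t.1)
  by_cases hts : G.Adj t.1 s.1
  · have := idxOf_le_idxOf_moveBefore_add_of_pos (p := (G.Adj t.1 ·)) (hmem t.1)
      (by simp) (by simpa using hts)
    rw [relabel]; omega
  · have := idxOf_le_idxOf_moveBefore_add (p := (G.Adj t.1 ·)) (a := t.1) (hmem s.1)
      (by simpa using hts)
    have := hmin s (hs.append_cons G hts)
    rw [relabel]; omega

variable (c₀ : ℕ)

def letterCode (l : List V) (j : ℕ) (t : V × Bool) : ℤ :=
  cond t.2 1 (-1) * ((l.idxOf t.1 + 1 + c₀ * j : ℕ) : ℤ)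

theorem abs_letterCode (l : List V) (j : ℕ) (t : V × Bool) :
    |letterCode c₀ l j t| = ((l.idxOf t.1 + 1 + c₀ * j : ℕ) : ℤ) := by
  rcases t with ⟨v, _ | _⟩ <;>
    simp only [letterCode, cond_false, cond_true, neg_one_mul, one_mul, abs_neg, Nat.abs_cast]

theorem letterCode_inj {l : List V} {j : ℕ} {t t' : V × Bool} (ht : t.1 ∈ l)
    (h : letterCode c₀ l j t = letterCode c₀ l j t') : t = t' := by
  obtain ⟨v, b⟩ := t
  obtain ⟨v', b'⟩ := t'
  have habs := congrArg abs h
  rw [abs_letterCode, abs_letterCode, Nat.cast_inj] at habs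
  dsimp only at habs ht
  obtain rfl : v = v' := (idxOf_inj ht).mp (by omega)
  have hsign := mul_right_cancel₀ (by positivity) h
  cases b <;> cases b' <;> simp_all

def encode : List V → ℕ → List (V × Bool) → List ℤ
  | _, _, [] => []
  | l, j, t :: w => letterCode c₀ l j t :: encode (relabel G l t.1) (j + 1) w

theorem length_encode (l : List V) (j : ℕ) (w : List (V × Bool)) :
    (encode G c₀ l j w).length = w.length := by
  induction w generalizing l j with
  | nil => rfl
  | cons t w ih => simp [encode, ih]

theorem encode_injective {l : List V} (hmem : ∀ v, v ∈ l) {j : ℕ} {w₁ w₂ : List (V × Bool)}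
    (h : encode G c₀ l j w₁ = encode G c₀ l j w₂) : w₁ = w₂ := by
  induction w₁ generalizing l j w₂ with
  | nil => cases w₂ <;> simp_all [encode]
  | cons t w₁ ih =>
    cases w₂ with
    | nil => simp [encode] at h
    | cons t' w₂ =>
      obtain ⟨hhead, htail⟩ := cons.inj h
      obtain rfl := letterCode_inj c₀ (hmem t.1) hhead
      rw [ih (fun v => (relabel_perm G l t.1).mem_iff.mpr (hmem v)) htail]

theorem abs_le_of_mem_encode {l : List V} (hmem : ∀ v, v ∈ l) {j : ℕ} {w : List (V × Bool)}
    {x : ℤ} (hx : x ∈ encode G c₀ l j w) :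
    1 ≤ |x| ∧ |x| ≤ l.length + c₀ * (j + w.length) := by
  induction w generalizing l j with
  | nil => simp [encode] at hx
  | cons t w ih =>
    rcases mem_cons.mp hx with rfl | hx
    · have := idxOf_lt_length_of_mem (hmem t.1)
      rw [abs_letterCode, length_cons]
      constructor
      · omega
      · push_cast; nlinarith
    · have := ih (fun v => (relabel_perm G l t.1).mem_iff.mpr (hmem v)) hx
      rw [(relabel_perm G l t.1).length_eq] at this
      simp only [length_cons]
      push_cast at this ⊢
      exact ⟨this.1, this.2.trans_eq (by ring)⟩

theorem isChain_encode_greedy [Fintype V] (hdeg : ∀ v, G.degree v ≤ c₀) {l : List V}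
    (hl : l.Nodup) (hmem : ∀ v, v ∈ l) (j : ℕ) (w : List (V × Bool)) :
    (encode G c₀ l j (greedy G l w)).IsChain (fun x y => |x| ≤ |y|) := by
  induction l, w using greedy_induction G generalizing j with
  | nil l => simp [greedy_nil, encode]
  | cons l a t b _ hmin hgreedy ih =>
    have hperm := relabel_perm G l t.1
    rw [hgreedy, encode, isChain_cons]
    refine ⟨fun y hy => ?_, ih (hperm.nodup_iff.mpr hl) (fun v => hperm.mem_iff.mpr (hmem v)) _⟩
    cases hrest : greedy G (relabel G l t.1) (a ++ b) with
    | nil => simp [hrest, encode] at hy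
    | cons s rest =>
      have hs : CommutesToFront G (a ++ b) s :=
        commutesToFront_of_mem_head?_greedy G (l := relabel G l t.1) (by simp [hrest])
      simp only [hrest, encode, head?_cons, Option.mem_some_iff] at hy
      subst hy
      have := idxOf_le_idxOf_relabel_add G hdeg hl hmem hmin hs
      rw [abs_letterCode, abs_letterCode, mul_add_one]
      push_cast; omega

noncomputable def code (l : List V) (w : List (V × Bool)) : List ℤ :=
  encode G c₀ l 0 (greedy G l w)

theorem length_code (l : List V) (w : List (V × Bool)) : (code G c₀ l w).length = w.length := by
  rw [code, length_encode, length_greedy]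

theorem abs_le_of_mem_code {l : List V} (hmem : ∀ v, v ∈ l) {w : List (V × Bool)} {x : ℤ}
    (hx : x ∈ code G c₀ l w) : 1 ≤ |x| ∧ |x| ≤ l.length + c₀ * w.length := by
  simpa [length_greedy] using abs_le_of_mem_encode G c₀ hmem hx

theorem lift_mk_eq_of_code_eq {l : List V} (hmem : ∀ v, v ∈ l) {H : Type*} [Group H]
    {s : V → H} (hs : ∀ v u, ¬ G.Adj v u → Commute (s v) (s u)) {w₁ w₂ : List (V × Bool)}
    (h : code G c₀ l w₁ = code G c₀ l w₂) :
    FreeGroup.lift s (FreeGroup.mk w₁) = FreeGroup.lift s (FreeGroup.mk w₂) := by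
  rw [← lift_mk_greedy G hs l, encode_injective G c₀ hmem h, lift_mk_greedy G hs l]

end RAAG

theorem SimpleGraph.ncard_neighborSet_eq_degree {V : Type*} (G : SimpleGraph V) (v : V)
    [Fintype (G.neighborSet v)] : (G.neighborSet v).ncard = G.degree v := by
  rw [← G.card_neighborSet_eq_degree, ← Nat.card_eq_fintype_card, Nat.card_coe_set_eq]

theorem finite_WSet (n c₀ R : ℕ) : (WSet n c₀ R).Finite := by
  have hD : (DSet n c₀ R).Finite := by
    have : (0 : ℤ) ≤ n + c₀ * R := by positivity
    refine (Set.finite_Icc (-((n : ℤ) + c₀ * R + 1)) ((n : ℤ) + c₀ * R + 1)).subset ?_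
    rintro x (⟨-, hx⟩ | rfl)
    · exact abs_le.mp (by linarith)
    · constructor <;> linarith
  exact (Set.Finite.pi fun _ => hD).subset fun ℓ hℓ => Set.mem_pi.mpr fun i _ => hℓ.1 i

theorem getD_mem_WSet {n c₀ R : ℕ} {E : List ℤ}
    (hE : ∀ x ∈ E, 1 ≤ |x| ∧ |x| ≤ (n : ℤ) + c₀ * R) (hchain : E.IsChain (|·| ≤ |·|)) :
    (fun i : Fin R => E.getD i ((n : ℤ) + c₀ * R + 1)) ∈ WSet n c₀ R := by
  set d : ℤ := (n : ℤ) + c₀ * R + 1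
  have hd : |d| = d := abs_of_nonneg (by positivity)
  have hget : ∀ i : ℕ, E.getD i d ∈ E ∨ E.getD i d = d := by
    intro i
    rw [List.getD_eq_getElem?_getD]
    cases h : E[i]?
    · exact Or.inr rfl
    · exact Or.inl (List.mem_of_getElem? h)
  refine ⟨fun i => (hget i).imp (hE _) id, fun i j hij => ?_⟩
  change |E.getD i d| ≤ |E.getD j d|
  by_cases hj : (j : ℕ) < E.length
  · have hi : (i : ℕ) < E.length := lt_of_le_of_lt hij hj
    rw [List.getD_eq_getElem _ _ hi, List.getD_eq_getElem _ _ hj]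
    rcases (Fin.le_iff_val_le_val.mp hij).lt_or_eq with hlt | heq
    · have : Trans (fun x y : ℤ => |x| ≤ |y|) (fun x y => |x| ≤ |y|) (fun x y => |x| ≤ |y|) :=
        ⟨le_trans⟩
      exact List.pairwise_iff_getElem.mp hchain.pairwise _ _ hi hj hlt
    · simp only [heq, le_refl]
  · rw [List.getD_eq_default _ _ (not_lt.mp hj), hd]
    rcases hget i with h | h
    · linarith [(hE _ h).2]
    · rw [h, hd]

theorem eq_of_getD_eq_of_abs_le {R : ℕ} {C : ℤ} {E₁ E₂ : List ℤ} (h₁ : E₁.length ≤ R)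
    (h₂ : E₂.length ≤ R) (hE₁ : ∀ x ∈ E₁, |x| ≤ C) (hE₂ : ∀ x ∈ E₂, |x| ≤ C)
    (h : (fun i : Fin R => E₁.getD i (C + 1)) = fun i : Fin R => E₂.getD i (C + 1)) : E₁ = E₂ := by
  have hC : ∀ E : List ℤ, (∀ x ∈ E, |x| ≤ C) → C + 1 ∉ E := fun E hE hx => by
    linarith [le_abs_self (C + 1), hE _ hx]
  exact List.eq_of_getD_eq h₁ h₂ (hC _ hE₁) (hC _ hE₂) fun i hi => congrFun h ⟨i, hi⟩

theorem exists_word_of_mem_ball_s6 {G V : Type*} [Group G] {s : V → G} {R : ℕ} {g : G}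
    (hg : g ∈ ball (Set.range s) R) :
    ∃ w : List (V × Bool), w.length ≤ R ∧ FreeGroup.lift s (FreeGroup.mk w) = g := by
  obtain ⟨L, hlen, hL, rfl⟩ := hg
  have : L ∈ Set.range (List.map fun x : V × Bool => cond x.2 (s x.1) (s x.1)⁻¹) := by
    rw [Set.range_list_map]
    intro t ht
    rcases hL t ht with ⟨v, rfl⟩ | ⟨v, hv⟩
    · exact ⟨(v, true), rfl⟩
    · exact ⟨(v, false), by simp [hv]⟩
  obtain ⟨w, rfl⟩ := this
  exact ⟨w, by simpa using hlen, FreeGroup.lift_mk⟩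

theorem ball_raag_injects_into_WSet_general {V : Type*} [Fintype V] (Θ : SimpleGraph V)
    (n c₀ : ℕ) (hn : n = Fintype.card V)
    (hdeg : ∀ v : V, ((Θᶜ).neighborSet v).ncard ≤ c₀)
    (R : ℕ) :
    (∃ f : (ball (raagGens Θ) R) → (WSet n c₀ R), Function.Injective f) ∧
    (ball (raagGens Θ) R).ncard ≤ (WSet n c₀ R).ncard := by
  classical
  set l₀ := (Finset.univ : Finset V).toList
  have hmem₀ : ∀ v, v ∈ l₀ := by simp [l₀]
  have hdeg' : ∀ v, Θᶜ.degree v ≤ c₀ := fun v => Θᶜ.ncard_neighborSet_eq_degree v ▸ hdeg v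
  choose! w hw_len hw_lift using
    fun g (hg : g ∈ ball (raagGens Θ) R) => exists_word_of_mem_ball_s6 hg
  set code := fun g => RAAG.code Θᶜ c₀ l₀ (w g)
  have hcode : ∀ g ∈ ball (raagGens Θ) R,
      (code g).length ≤ R ∧ ∀ x ∈ code g, 1 ≤ |x| ∧ |x| ≤ (n : ℤ) + c₀ * R := fun g hg => by
    refine ⟨(RAAG.length_code ..).trans_le (hw_len g hg), fun x hx => ?_⟩
    obtain ⟨hpos, hle⟩ := RAAG.abs_le_of_mem_code Θᶜ c₀ hmem₀ hx
    have hlen₀ : (l₀.length : ℤ) = n := by simp [l₀, hn]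
    exact ⟨hpos, by nlinarith [hw_len g hg]⟩
  set Φ : RAAG Θ → Fin R → ℤ := fun g i => (code g).getD i ((n : ℤ) + c₀ * R + 1)
  have hmaps : Set.MapsTo Φ (ball (raagGens Θ) R) (WSet n c₀ R) := fun g hg =>
    getD_mem_WSet (hcode g hg).2
      (RAAG.isChain_encode_greedy _ _ hdeg' (Finset.nodup_toList _) hmem₀ 0 _)
  have hinj : Set.InjOn Φ (ball (raagGens Θ) R) := fun g₁ hg₁ g₂ hg₂ h => by
    rw [← hw_lift g₁ hg₁, ← hw_lift g₂ hg₂]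
    refine RAAG.lift_mk_eq_of_code_eq Θᶜ c₀ hmem₀ (fun _ _ => RAAG.commute_of_not_adj_compl Θ) ?_
    exact eq_of_getD_eq_of_abs_le (hcode g₁ hg₁).1 (hcode g₂ hg₂).1
      (fun x hx => ((hcode g₁ hg₁).2 x hx).2) (fun x hx => ((hcode g₂ hg₂).2 x hx).2) h
  exact ⟨⟨hmaps.restrict _ _ _, hmaps.restrict_inj.mpr hinj⟩,
    Set.ncard_le_ncard_of_injOn Φ hmaps hinj (finite_WSet n c₀ R)⟩

/-- If the complementary graph of `Θ` has maximum degree at most `c₀`, then the ball of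
radius `R` in `A(Θ)` injects into `W_R(n, c₀)`, where `n = #V`. -/
theorem ball_raag_injects_into_WSet {V : Type*} [Fintype V] (Θ : SimpleGraph V)
    (n c₀ : ℕ) (hn : n = Fintype.card V) (hn1 : 1 ≤ n) (hc : 1 ≤ c₀)
    (hdeg : ∀ v : V, ((Θᶜ).neighborSet v).ncard ≤ c₀)
    (R : ℕ) (hR : 1 ≤ R) :
    (∃ f : (ball (raagGens Θ) R) → (WSet n c₀ R), Function.Injective f) ∧
    (ball (raagGens Θ) R).ncard ≤ (WSet n c₀ R).ncard :=
  ball_raag_injects_into_WSet_general Θ n c₀ hn hdeg R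
end
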